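/- Let R be a commutative noetherian ring, let C be an ideal of R that is a semidualizing R-module, let h ∈ R with h = r₀² for some r₀ ∈ R, and let S(h) be the pseudocanonical cover of R via h. Then the triple (R, S(h), C) satisfies Property (**): the maps f : R → S(h), f(r) = (r,0), and g : S(h) → R, g(r,c) = r + c·r₀, are ring homomorphisms with g ∘ f = id_R, Hom_R(S(h), C) ≅ S(h) as S(h)-modules, Ext_R^i(S(h), C) = 0 for all i ≥ 1, and ker g ≅ C as R-modules. -/

import Mathlib

universe u

open TensorProduct CategoryTheory

noncomputable section




/-- The pseudocanonical cover `S(h)` of `R` via `h`: the abelian group `R ⊕ C` with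
multiplication `(r, c) * (r', c') = (r * r' + c * c' * h, r * c' + r' * c)`. -/
def PseudoCanCover (R : Type u) [CommRing R] (C : Ideal R) (h : R) : Type u := R × C

namespace PseudoCanCover

variable {R : Type u} [CommRing R] {C : Ideal R} {h : R}

/-- Build an element of `S(h)` from its components. -/
def mk (r : R) (c : C) : PseudoCanCover R C h := (r, c)

/-- First component. -/
def fst (p : PseudoCanCover R C h) : R := p.1

/-- Second component. -/
def snd (p : PseudoCanCover R C h) : C := p.2

theorem ext' {p q : PseudoCanCover R C h} (h1 : p.fst = q.fst)
    (h2 : (p.snd : R) = (q.snd : R)) : p = q :=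
  Prod.ext h1 (Subtype.ext h2)

instance : AddCommGroup (PseudoCanCover R C h) := inferInstanceAs (AddCommGroup (R × C))

instance : Mul (PseudoCanCover R C h) :=
  ⟨fun p q => mk (p.fst * q.fst + (p.snd : R) * (q.snd : R) * h)
    ⟨p.fst * (q.snd : R) + q.fst * (p.snd : R),
      add_mem (C.mul_mem_left _ q.snd.2) (C.mul_mem_left _ p.snd.2)⟩⟩

instance : One (PseudoCanCover R C h) := ⟨mk 1 0⟩

@[simp] theorem mk_fst (r : R) (c : C) : (mk r c : PseudoCanCover R C h).fst = r := rfl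

@[simp] theorem mk_snd (r : R) (c : C) :
    ((mk r c : PseudoCanCover R C h).snd : R) = (c : R) := rfl

@[simp] theorem mul_fst (p q : PseudoCanCover R C h) :
    (p * q).fst = p.fst * q.fst + (p.snd : R) * (q.snd : R) * h := rfl

@[simp] theorem mul_snd (p q : PseudoCanCover R C h) :
    ((p * q).snd : R) = p.fst * (q.snd : R) + q.fst * (p.snd : R) := rfl

@[simp] theorem add_fst (p q : PseudoCanCover R C h) : (p + q).fst = p.fst + q.fst := rfl

@[simp] theorem add_snd (p q : PseudoCanCover R C h) :
    ((p + q).snd : R) = (p.snd : R) + (q.snd : R) := rfl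

@[simp] theorem one_fst : (1 : PseudoCanCover R C h).fst = 1 := rfl

@[simp] theorem one_snd : ((1 : PseudoCanCover R C h).snd : R) = 0 := rfl

@[simp] theorem zero_fst : (0 : PseudoCanCover R C h).fst = 0 := rfl

@[simp] theorem zero_snd : ((0 : PseudoCanCover R C h).snd : R) = 0 := rfl

instance instCommRing : CommRing (PseudoCanCover R C h) :=
  { (inferInstanceAs (AddCommGroup (PseudoCanCover R C h)) : AddCommGroup (PseudoCanCover R C h)),
    (inferInstanceAs (Mul (PseudoCanCover R C h)) : Mul (PseudoCanCover R C h)),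
    (inferInstanceAs (One (PseudoCanCover R C h)) : One (PseudoCanCover R C h)) with
    mul_assoc := fun a b c => ext' (by simp; ring) (by simp; ring)
    one_mul := fun a => ext' (by simp) (by simp)
    mul_one := fun a => ext' (by simp) (by simp)
    left_distrib := fun a b c => ext' (by simp; ring) (by simp; ring)
    right_distrib := fun a b c => ext' (by simp; ring) (by simp; ring)
    zero_mul := fun a => ext' (by simp) (by simp)
    mul_zero := fun a => ext' (by simp) (by simp)
    mul_comm := fun a b => ext' (by simp; ring) (by simp; ring) }

/-- The canonical inclusion `R → S(h)`. -/
def incl : R →+* PseudoCanCover R C h where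
  toFun r := mk r 0
  map_one' := rfl
  map_mul' r s := (ext' (by simp) (by simp)).symm
  map_zero' := rfl
  map_add' r s := (ext' (by simp) (by simp)).symm

/-- The projection `S(h) → R`, `(r, c) ↦ r + c * r₀`, where `h = r₀ ^ 2`. -/
def proj (r₀ : R) (hh : h = r₀ ^ 2) : PseudoCanCover R C h →+* R where
  toFun p := p.fst + (p.snd : R) * r₀
  map_one' := by simp
  map_mul' p q := by simp [hh]; ring
  map_zero' := by simp
  map_add' p q := by simp; ring

end PseudoCanCover





/-- The `S`-module structure on `Hom_R(S, M)` coming from the `S`-action on the first slot: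
`(s • φ) t = φ (s * t)`. -/
def homModS {R S : Type u} [CommRing R] [CommRing S] [Algebra R S]
    (M : Type u) [AddCommGroup M] [Module R M] :
    Module S (S →ₗ[R] M) where
  smul s φ := φ.comp (LinearMap.mulLeft R s)
  one_smul φ := by
    ext t
    show φ (1 * t) = φ t
    rw [one_mul]
  mul_smul s s' φ := by
    ext t
    show φ ((s * s') * t) = φ (s' * (s * t))
    rw [mul_assoc, mul_left_comm]
  smul_zero s := by ext t; rfl
  smul_add s φ ψ := by ext t; rfl
  add_smul s s' φ := by
    ext t
    show φ ((s + s') * t) = φ (s * t) + φ (s' * t)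
    rw [add_mul, map_add]
  zero_smul φ := by
    ext t
    show φ (0 * t) = 0
    rw [zero_mul, map_zero]

/-- The `ModuleCat`-valued `Ext` of two modules. -/
abbrev extMod (R : Type u) [CommRing R] (M N : Type u)
    [AddCommGroup M] [Module R M] [AddCommGroup N] [Module R N] (i : ℕ) : ModuleCat.{u} R :=
  ((Ext R (ModuleCat.{u} R) i).obj (Opposite.op (ModuleCat.of R M))).obj (ModuleCat.of R N)

/-- `C` is a semidualizing `R`-module. -/
def IsSemidualizing (R : Type u) [CommRing R]
    (C : Type u) [AddCommGroup C] [Module R C] : Prop :=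
  Module.Finite R C ∧
  Function.Bijective (fun r : R => (r • LinearMap.id : C →ₗ[R] C)) ∧
  ∀ i : ℕ, 1 ≤ i → Subsingleton (extMod R C C i)

/-- Property (*) for the triple `(R, S, C)`, relative to the retraction `g` of the
algebra map `R → S`. -/
def PropertyStar (R S : Type u) [CommRing R] [CommRing S] [Algebra R S] (g : S →+* R)
    (C : Type u) [AddCommGroup C] [Module R C] : Prop :=
  g.comp (algebraMap R S) = RingHom.id R ∧
  (letI : Module S (S →ₗ[R] C) := homModS C
   Nonempty ((S →ₗ[R] C) ≃ₗ[S] S)) ∧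
  ∀ i : ℕ, 1 ≤ i → Subsingleton (extMod R S C i)

/-- Property (**): Property (*) together with `C ≅ ker g` as `R`-modules. -/
def PropertyStarStar (R S : Type u) [CommRing R] [CommRing S] [Algebra R S] (g : S →+* R)
    (C : Type u) [AddCommGroup C] [Module R C] : Prop :=
  PropertyStar R S g C ∧
  (letI : Module R ↥(RingHom.ker g) := Module.compHom _ (algebraMap R S)
   Nonempty (↥(RingHom.ker g) ≃ₗ[R] C))

/-!
As an `R`-module `S(h) = R ⊕ C`, so `Ext^i_R(S(h), C) = Ext^i_R(C, C) = 0` for `i ≥ 1`.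
The map `S(h) → Hom_R(S(h), C)`, `s ↦ (t ↦ (s t)₂)`, is `S(h)`-linear, and it is bijective because
`C` is semidualizing: every `R`-endomorphism of `C` is multiplication by a unique element of `R`.
The squareness `h = r₀²` is what makes `g (r, c) = r + c r₀` multiplicative, and
`ker g = {(-c r₀, c)} ≅ C`.
-/

open Limits in
instance Functor.leftDerived_additive {𝒞 𝒟 : Type*} [Category 𝒞] [Category 𝒟] [Abelian 𝒞]
    [EnoughProjectives 𝒞] [Abelian 𝒟] (F : 𝒞 ⥤ 𝒟) [F.Additive] (n : ℕ) :
    (F.leftDerived n).Additive where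
  map_add {X Y f g} := by
    let P := ProjectiveResolution.of X
    let Q := ProjectiveResolution.of Y
    have w : (ProjectiveResolution.lift f P Q + ProjectiveResolution.lift g P Q) ≫ Q.π =
        P.π ≫ (ChainComplex.single₀ 𝒞).map (f + g) := by
      rw [Preadditive.add_comp, ProjectiveResolution.lift_commutes,
        ProjectiveResolution.lift_commutes, Functor.map_add, Preadditive.comp_add]
    rw [F.leftDerived_map_eq n (f + g) _ w,
      F.leftDerived_map_eq n f _ (ProjectiveResolution.lift_commutes f P Q),
      F.leftDerived_map_eq n g _ (ProjectiveResolution.lift_commutes g P Q),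
      Functor.map_add, Preadditive.add_comp, Preadditive.comp_add]

instance Ext_flip_obj_additive (R : Type*) [Ring R] (𝒞 : Type*) [Category 𝒞] [Abelian 𝒞]
    [Linear R 𝒞] [EnoughProjectives 𝒞] (n : ℕ) (Y : 𝒞) : ((Ext R 𝒞 n).flip.obj Y).Additive :=
  inferInstanceAs (((linearYoneda R 𝒞).obj Y).rightOp.leftDerived n).leftOp.Additive

open Limits in
/-- `Ext` is additive in the first argument and vanishes in positive degrees on the projective
summand `R`. -/
theorem subsingleton_extMod_succ_of_linearEquiv_prod {R : Type u} [CommRing R]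
    {M N Y : Type u} [AddCommGroup M] [Module R M] [AddCommGroup N] [Module R N]
    [AddCommGroup Y] [Module R Y] (e : M ≃ₗ[R] R × N) (n : ℕ)
    (hN : Subsingleton (extMod R N Y (n + 1))) : Subsingleton (extMod R M Y (n + 1)) := by
  let G := (Ext R (ModuleCat.{u} R) (n + 1)).flip.obj (ModuleCat.of R Y)
  have : G.Additive := Ext_flip_obj_additive _ _ _ _
  have := preservesBinaryBiproducts_of_preservesBiproducts G
  have : Projective (ModuleCat.of R R) :=
    ModuleCat.projective_of_free (Module.Basis.singleton PUnit.{u + 1} R)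
  have hR : IsZero (G.obj (Opposite.op (ModuleCat.of R R))) :=
    isZero_Ext_succ_of_projective _ _ n
  have hsplit : ModuleCat.of R R ⊞ ModuleCat.of R N ≅ ModuleCat.of R M :=
    ModuleCat.biprodIsoProd _ _ ≪≫ e.symm.toModuleIso
  rw [← ModuleCat.isZero_iff_subsingleton] at hN ⊢
  refine IsZero.of_iso ?_ (G.mapIso (hsplit.op ≪≫ biprod.opIso _ _) ≪≫ G.mapBiprod _ _)
  exact (biprod_isZero_iff _ _).2 ⟨hR, hN⟩

namespace PseudoCanCover

variable {R : Type u} [CommRing R] {C : Ideal R} {h : R}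

instance : Algebra R (PseudoCanCover R C h) := incl.toAlgebra

theorem incl_apply (r : R) : (incl r : PseudoCanCover R C h) = mk r 0 := rfl

@[simp] theorem smul_fst (r : R) (p : PseudoCanCover R C h) : (r • p).fst = r * p.fst := by
  show (incl r * p).fst = _
  simp [incl_apply]

@[simp] theorem smul_snd (r : R) (p : PseudoCanCover R C h) :
    ((r • p).snd : R) = r * p.snd := by
  show ((incl r * p).snd : R) = _
  simp [incl_apply]

theorem proj_comp_incl (r₀ : R) (hsq : h = r₀ ^ 2) :
    (proj r₀ hsq).comp (incl : R →+* PseudoCanCover R C h) = RingHom.id R := by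
  ext r
  simp [proj, incl_apply]

def equivProd : PseudoCanCover R C h ≃ₗ[R] R × C where
  toFun p := (p.fst, p.snd)
  invFun q := mk q.1 q.2
  map_add' _ _ := rfl
  map_smul' r p := Prod.ext (smul_fst r p) (Subtype.ext (smul_snd r p))
  left_inv _ := rfl
  right_inv _ := rfl

def inr : C →ₗ[R] PseudoCanCover R C h :=
  equivProd.symm.toLinearMap ∘ₗ LinearMap.inr R R C

@[simp] theorem inr_fst (c : C) : (inr c : PseudoCanCover R C h).fst = 0 := rfl

@[simp] theorem inr_snd (c : C) : ((inr c : PseudoCanCover R C h).snd : R) = c := rfl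

theorem fst_smul_one_add_inr_snd (p : PseudoCanCover R C h) : p.fst • 1 + inr p.snd = p :=
  ext' (by simp) (by simp)

def sndₗ : PseudoCanCover R C h →ₗ[R] C :=
  LinearMap.snd R R C ∘ₗ equivProd.toLinearMap

instance : Module (PseudoCanCover R C h) (PseudoCanCover R C h →ₗ[R] C) := homModS C

section HomEquiv

variable (hC : Function.Bijective (fun r : R => (r • LinearMap.id : C →ₗ[R] C)))
include hC

theorem injective_toSpanSingleton_sndₗ :
    Function.Injective (LinearMap.toSpanSingleton (PseudoCanCover R C h)
      (PseudoCanCover R C h →ₗ[R] C) sndₗ) := by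
  refine (injective_iff_map_eq_zero _).2 fun s hs => ?_
  have hsnd (t : PseudoCanCover R C h) : ((s * t).snd : R) = 0 :=
    congrArg Subtype.val (LinearMap.congr_fun hs t)
  have h_snd : (s.snd : R) = 0 := by simpa using hsnd 1
  have h_fst : s.fst = 0 := hC.injective <| LinearMap.ext fun c => Subtype.ext <| by
    simpa using hsnd (inr c)
  exact ext' h_fst h_snd

/-- The restriction of `φ : S(h) → C` to `C` is a homothety `a`, and then `φ` is multiplication
by `(a, φ 1)` followed by the second projection. -/
theorem surjective_toSpanSingleton_sndₗ :
    Function.Surjective (LinearMap.toSpanSingleton (PseudoCanCover R C h)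
      (PseudoCanCover R C h →ₗ[R] C) sndₗ) := by
  intro φ
  obtain ⟨a, ha⟩ := hC.surjective (φ ∘ₗ inr)
  have hφ_inr (c : C) : φ (inr c) = a • c := (LinearMap.congr_fun ha c).symm
  refine ⟨mk a (φ 1), LinearMap.ext fun t => Subtype.ext ?_⟩
  conv_rhs => rw [← fst_smul_one_add_inr_snd t, map_add, map_smul, hφ_inr]
  show ((mk a (φ 1) * t).snd : R) = _
  simp only [mul_snd, mk_fst, mk_snd, Submodule.coe_add, Submodule.coe_smul, smul_eq_mul]
  ring

/-- Given by `s ↦ (t ↦ (s * t).snd)`. -/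
def homEquiv : PseudoCanCover R C h ≃ₗ[PseudoCanCover R C h]
    (PseudoCanCover R C h →ₗ[R] C) :=
  .ofBijective _ ⟨injective_toSpanSingleton_sndₗ hC, surjective_toSpanSingleton_sndₗ hC⟩

end HomEquiv

/-- The kernel of `(r, c) ↦ r + c * r₀` consists of the pairs `(-c * r₀, c)`. -/
def kerEquiv (r₀ : R) (hsq : h = r₀ ^ 2) :
    letI : Module R (RingHom.ker (proj r₀ hsq : PseudoCanCover R C h →+* R)) :=
      Module.compHom _ (algebraMap R (PseudoCanCover R C h))
    RingHom.ker (proj r₀ hsq : PseudoCanCover R C h →+* R) ≃ₗ[R] C :=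
  letI : Module R (RingHom.ker (proj r₀ hsq : PseudoCanCover R C h →+* R)) :=
    Module.compHom _ (algebraMap R (PseudoCanCover R C h))
  { toFun x := x.1.snd
    map_add' _ _ := rfl
    map_smul' r x := Subtype.ext (smul_snd r x.1)
    invFun c := ⟨mk (-(c * r₀)) c, by simp [proj]⟩
    left_inv x := Subtype.ext <| ext' (by
        have hx : x.1.fst + x.1.snd * r₀ = 0 := x.2
        simp only [mk_fst]
        linear_combination -hx) rfl
    right_inv _ := rfl }

end PseudoCanCover

theorem pseudoCanCover_propertyStarStar_general (R : Type u) [CommRing R]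
    (C : Ideal R) (hC : IsSemidualizing R ↥C) (h r₀ : R) (hsq : h = r₀ ^ 2) :
    letI : Algebra R (PseudoCanCover R C h) :=
      (PseudoCanCover.incl : R →+* PseudoCanCover R C h).toAlgebra
    PropertyStarStar R (PseudoCanCover R C h) (PseudoCanCover.proj r₀ hsq) ↥C := by
  refine ⟨⟨PseudoCanCover.proj_comp_incl r₀ hsq, ⟨(PseudoCanCover.homEquiv hC.2.1).symm⟩,
    fun i hi => ?_⟩, ⟨PseudoCanCover.kerEquiv r₀ hsq⟩⟩
  obtain ⟨n, rfl⟩ := Nat.exists_eq_add_of_le' hi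
  exact subsingleton_extMod_succ_of_linearEquiv_prod PseudoCanCover.equivProd n (hC.2.2 _ hi)

/-- If an ideal `C` of `R` is semidualizing as an `R`-module, `h = r₀ ^ 2` is a square in
`R`, and `S(h)` is the pseudocanonical cover of `R` via `h`, then the triple
`(R, S(h), C)` satisfies Property (**), with `f : r ↦ (r, 0)` and
`g : (r, c) ↦ r + c * r₀`. -/
theorem pseudoCanCover_propertyStarStar (R : Type u) [CommRing R] [IsNoetherianRing R]
    (C : Ideal R) (hC : IsSemidualizing R ↥C) (h r₀ : R) (hsq : h = r₀ ^ 2) :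
    letI : Algebra R (PseudoCanCover R C h) :=
      (PseudoCanCover.incl : R →+* PseudoCanCover R C h).toAlgebra
    PropertyStarStar R (PseudoCanCover R C h) (PseudoCanCover.proj r₀ hsq) ↥C :=
  pseudoCanCover_propertyStarStar_general R C hC h r₀ hsq

end
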